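/- Let μ₁,...,μₙ : M → K be simplicial maps with μ₁ ∼ ... ∼ μₙ, each admitting a common right strong homotopy inverse α : K → M (i.e., μᵢ ∘ α ∼ id_K for all i). Then for any simplicial maps φ₁,...,φₙ : K → K', SD(φ₁∘μ₁,...,φₙ∘μₙ) = SD(φ₁,...,φₙ). -/
import Mathlib


/-- An abstract simplicial complex on vertex type `V`. -/
structure ASC (V : Type) where
  faces : Set (Finset V)
  nonempty_of_mem : ∀ {s : Finset V}, s ∈ faces → s.Nonempty
  down_closed : ∀ {s t : Finset V}, s ∈ faces → t ⊆ s → t.Nonempty → t ∈ faces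

/-- A simplicial map between abstract simplicial complexes. -/
structure SMap {V W : Type} [DecidableEq W] (K : ASC V) (L : ASC W) where
  toFun : V → W
  maps_faces : ∀ {s : Finset V}, s ∈ K.faces → s.image toFun ∈ L.faces

namespace SMap

variable {V W U : Type} [DecidableEq V] [DecidableEq W] [DecidableEq U]
  {K : ASC V} {L : ASC W} {M : ASC U}

/-- The identity simplicial map. -/
def id (K : ASC V) : SMap K K :=
  ⟨fun v => v, by intro s hs; simpa using hs⟩

/-- Composition of simplicial maps. -/
def comp (ψ : SMap L M) (φ : SMap K L) : SMap K M :=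
  ⟨ψ.toFun ∘ φ.toFun, by
    intro s hs
    have h := ψ.maps_faces (φ.maps_faces hs)
    simpa [Finset.image_image] using h⟩

end SMap

/-- Two simplicial maps are contiguous if the images of each simplex under the two
maps together span a simplex. -/
def Contiguous {V W : Type} [DecidableEq W] {K : ASC V} {L : ASC W}
    (φ ψ : SMap K L) : Prop :=
  ∀ {s : Finset V}, s ∈ K.faces → (s.image φ.toFun ∪ s.image ψ.toFun) ∈ L.faces

/-- Being in the same contiguity class: the reflexive-transitive closure of
contiguity (`φ ∼ ψ`). -/
def CClass {V W : Type} [DecidableEq W] {K : ASC V} {L : ASC W}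
    (φ ψ : SMap K L) : Prop :=
  Relation.ReflTransGen Contiguous φ ψ

/-- The type of subcomplexes of `K`. -/
def ASC.Sub {V : Type} (K : ASC V) : Type :=
  {Ω : ASC V // Ω.faces ⊆ K.faces}

/-- Restriction of a simplicial map to a subcomplex of the domain. -/
def SMap.restrict {V W : Type} [DecidableEq W] {K : ASC V} {L : ASC W}
    (φ : SMap K L) (Ω : K.Sub) : SMap Ω.1 L :=
  ⟨φ.toFun, by intro s hs; exact φ.maps_faces (Ω.2 hs)⟩

/-- `SDle φ k` : the family `φ` has contiguity distance at most `k`, witnessed by a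
cover of `K` by `k+1` subcomplexes on each of which all the maps restrict into a
single contiguity class. -/
def SDle {V W : Type} [DecidableEq W] {K : ASC V} {L : ASC W} {n : ℕ}
    (φ : Fin n → SMap K L) (k : ℕ) : Prop :=
  ∃ Ω : Fin (k + 1) → K.Sub,
    (∀ s ∈ K.faces, ∃ j, s ∈ (Ω j).1.faces) ∧
    ∀ j i i', CClass ((φ i).restrict (Ω j)) ((φ i').restrict (Ω j))

/-- The `n`-th contiguity distance `SD(φ₁,…,φₙ)`, valued in `ℕ∞`. -/
noncomputable def SD {V W : Type} [DecidableEq W] {K : ASC V} {L : ASC W} {n : ℕ}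
    (φ : Fin n → SMap K L) : ℕ∞ :=
  sInf {m : ℕ∞ | ∃ k : ℕ, m = (k : ℕ∞) ∧ SDle φ k}

/-- `v` is a vertex of `K`. -/
def ASC.isVertex {V : Type} (K : ASC V) (v : V) : Prop :=
  ({v} : Finset V) ∈ K.faces

/-- The constant simplicial map at a vertex `v` of `L`. -/
def constMap {V W : Type} [DecidableEq W] (K : ASC V) (L : ASC W) {v : W}
    (hv : L.isVertex v) : SMap K L :=
  ⟨fun _ => v, by
    intro s hs
    rw [Finset.image_const (K.nonempty_of_mem hs) v]
    exact hv⟩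

/-- The inclusion of a subcomplex. -/
def incl {V : Type} [DecidableEq V] {K : ASC V} (Ω : K.Sub) : SMap Ω.1 K :=
  ⟨fun x => x, by intro s hs; simpa using Ω.2 hs⟩

/-- A subcomplex is categorical if its inclusion is in the same contiguity class
as a constant map. -/
def Categorical {V : Type} [DecidableEq V] {K : ASC V} (Ω : K.Sub) : Prop :=
  ∃ v : V, ∃ hv : K.isVertex v, CClass (incl Ω) (constMap Ω.1 K hv)

/-- `scatle K k` : `K` is covered by `k+1` categorical subcomplexes. -/
def scatle {V : Type} [DecidableEq V] (K : ASC V) (k : ℕ) : Prop :=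
  ∃ Ω : Fin (k + 1) → K.Sub,
    (∀ s ∈ K.faces, ∃ j, s ∈ (Ω j).1.faces) ∧ ∀ j, Categorical (Ω j)

/-- The simplicial Lusternik–Schnirelmann category, valued in `ℕ∞`. -/
noncomputable def scat {V : Type} [DecidableEq V] (K : ASC V) : ℕ∞ :=
  sInf {m : ℕ∞ | ∃ k : ℕ, m = (k : ℕ∞) ∧ scatle K k}

/-- The `n`-fold categorical product `Kⁿ`. -/
def ASC.prodPow {V : Type} [DecidableEq V] (K : ASC V) (n : ℕ) : ASC (Fin n → V) where
  faces := {s | s.Nonempty ∧ ∀ i : Fin n, s.image (fun f => f i) ∈ K.faces}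
  nonempty_of_mem := fun h => h.1
  down_closed := by
    intro s t hs hts ht
    refine ⟨ht, fun i => ?_⟩
    exact K.down_closed (hs.2 i) (Finset.image_subset_image (f := fun f => f i) hts)
      (ht.image _)

/-- Projection to the `i`-th factor of the categorical product. -/
def proj {V : Type} [DecidableEq V] (K : ASC V) (n : ℕ) (i : Fin n) :
    SMap (K.prodPow n) K :=
  ⟨fun f => f i, by intro s hs; exact hs.2 i⟩

/-- The diagonal simplicial map `K → Kⁿ`. -/
def diag {V : Type} [DecidableEq V] (K : ASC V) (n : ℕ) : SMap K (K.prodPow n) :=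
  ⟨fun v _ => v, by
    intro s hs
    refine ⟨(K.nonempty_of_mem hs).image _, fun i => ?_⟩
    have h : (s.image fun v (_ : Fin n) => v).image (fun f => f i) = s := by
      rw [Finset.image_image]
      exact Finset.image_id'
    rw [h]; exact hs⟩

/-- A subcomplex `Ω ⊆ Kⁿ` is `n`-Farber if the diagonal admits a section over `Ω`
up to contiguity class. -/
def IsFarber {V : Type} [DecidableEq V] {K : ASC V} {n : ℕ}
    (Ω : (K.prodPow n).Sub) : Prop :=
  ∃ σ : SMap Ω.1 K, CClass ((diag K n).comp σ) (incl Ω)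

/-- `dTCle K n k` : `Kⁿ` is covered by `k+1` `n`-Farber subcomplexes. -/
def dTCle {V : Type} [DecidableEq V] (K : ASC V) (n k : ℕ) : Prop :=
  ∃ Ω : Fin (k + 1) → (K.prodPow n).Sub,
    (∀ s ∈ (K.prodPow n).faces, ∃ j, s ∈ (Ω j).1.faces) ∧ ∀ j, IsFarber (Ω j)

/-- The `n`-th discrete topological complexity, valued in `ℕ∞`. -/
noncomputable def dTC {V : Type} [DecidableEq V] (K : ASC V) (n : ℕ) : ℕ∞ :=
  sInf {m : ℕ∞ | ∃ k : ℕ, m = (k : ℕ∞) ∧ dTCle K n k}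

/-- `K` is edge-path connected: any two vertices are joined by a finite edge path. -/
def ASC.EPConn {V : Type} [DecidableEq V] (K : ASC V) : Prop :=
  ∀ u v : V, K.isVertex u → K.isVertex v →
    Relation.ReflTransGen (fun a b => ({a, b} : Finset V) ∈ K.faces) u v

/-- `K` is strongly collapsible: the identity is in the same contiguity class as a
constant map. -/
def StronglyCollapsible {V : Type} [DecidableEq V] (K : ASC V) : Prop :=
  ∃ v : V, ∃ hv : K.isVertex v, CClass (SMap.id K) (constMap K K hv)

/-- `μ` is a right strong equivalence: it has a right strong homotopy inverse. -/
def RightStrongEq {V W : Type} [DecidableEq V] [DecidableEq W]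
    {K : ASC V} {L : ASC W} (μ : SMap K L) : Prop :=
  ∃ α : SMap L K, CClass (μ.comp α) (SMap.id L)

/-- `μ` is a left strong equivalence: it has a left strong homotopy inverse. -/
def LeftStrongEq {V W : Type} [DecidableEq V] [DecidableEq W]
    {K : ASC V} {L : ASC W} (μ : SMap K L) : Prop :=
  ∃ β : SMap L K, CClass (β.comp μ) (SMap.id K)

/-- The barycentric subdivision of `K`: vertices are the simplices of `K`, and
simplices are chains of simplices of `K`. -/
def ASC.sd {V : Type} (K : ASC V) : ASC (Finset V) where
  faces := {S | S.Nonempty ∧ (∀ σ ∈ S, σ ∈ K.faces) ∧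
    ∀ σ ∈ S, ∀ τ ∈ S, σ ⊆ τ ∨ τ ⊆ σ}
  nonempty_of_mem := fun h => h.1
  down_closed := fun hS hTS hT =>
    ⟨hT, fun σ hσ => hS.2.1 σ (hTS hσ), fun σ hσ τ hτ => hS.2.2 σ (hTS hσ) τ (hTS hτ)⟩

/-- The induced simplicial map on barycentric subdivisions. -/
def SMap.sd {V W : Type} [DecidableEq V] [DecidableEq W] {K : ASC V} {L : ASC W}
    (φ : SMap K L) : SMap K.sd L.sd :=
  ⟨fun σ => σ.image φ.toFun, by
    intro S hS
    refine ⟨hS.1.image _, ?_, ?_⟩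
    · intro τ hτ
      simp only [Finset.mem_image] at hτ
      obtain ⟨σ, hσ, rfl⟩ := hτ
      exact φ.maps_faces (hS.2.1 σ hσ)
    · intro τ₁ h₁ τ₂ h₂
      simp only [Finset.mem_image] at h₁ h₂
      obtain ⟨σ₁, hσ₁, rfl⟩ := h₁
      obtain ⟨σ₂, hσ₂, rfl⟩ := h₂
      rcases hS.2.2 σ₁ hσ₁ σ₂ hσ₂ with h | h
      · exact Or.inl (Finset.image_subset_image h)
      · exact Or.inr (Finset.image_subset_image h)⟩


section Aux

variable {V W U : Type} [DecidableEq V] [DecidableEq W] [DecidableEq U]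
  {K : ASC V} {L : ASC W} {M : ASC U}

theorem SMap.ext' {φ ψ : SMap K L} (h : φ.toFun = ψ.toFun) : φ = ψ := by
  cases φ; cases ψ; simpa using h

theorem Contiguous.symm' {φ ψ : SMap K L} (h : Contiguous φ ψ) : Contiguous ψ φ := by
  intro s hs
  have := h hs
  rwa [Finset.union_comm] at this

theorem CClass.symm' {φ ψ : SMap K L} (h : CClass φ ψ) : CClass ψ φ := by
  induction h with
  | refl => exact .refl
  | tail _ h2 ih => exact .trans (Relation.ReflTransGen.single h2.symm') ih

theorem Contiguous.comp_left {φ ψ : SMap K L} (χ : SMap L M) (h : Contiguous φ ψ) :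
    Contiguous (χ.comp φ) (χ.comp ψ) := by
  intro s hs
  have := χ.maps_faces (h hs)
  simpa [SMap.comp, Finset.image_union, Finset.image_image, Function.comp] using this

theorem Contiguous.comp_right {φ ψ : SMap K L} (χ : SMap M K) (h : Contiguous φ ψ) :
    Contiguous (φ.comp χ) (ψ.comp χ) := by
  intro s hs
  have := h (χ.maps_faces hs)
  simpa [SMap.comp, Finset.image_image, Function.comp] using this

theorem CClass.comp_left {φ ψ : SMap K L} (χ : SMap L M) (h : CClass φ ψ) :
    CClass (χ.comp φ) (χ.comp ψ) := by
  induction h with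
  | refl => exact .refl
  | tail _ h2 ih => exact ih.tail (h2.comp_left χ)

theorem CClass.comp_right {φ ψ : SMap K L} (χ : SMap M K) (h : CClass φ ψ) :
    CClass (φ.comp χ) (ψ.comp χ) := by
  induction h with
  | refl => exact .refl
  | tail _ h2 ih => exact ih.tail (h2.comp_right χ)

theorem SMap.restrict_eq_comp_incl (φ : SMap K L) (Ω : K.Sub) :
    φ.restrict Ω = φ.comp (incl Ω) :=
  SMap.ext' rfl

theorem SDle_pullback {n k : ℕ} (ψ : Fin n → SMap K L) (χ : Fin n → SMap M L)
    (ρ : SMap M K) (hc : ∀ i, CClass (χ i) ((ψ i).comp ρ)) (h : SDle ψ k) :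
    SDle χ k := by
  obtain ⟨Ω, hcov, hcc⟩ := h
  let Λ : Fin (k + 1) → M.Sub := fun j =>
    ⟨⟨{s | s ∈ M.faces ∧ s.image ρ.toFun ∈ (Ω j).1.faces},
      fun hs => M.nonempty_of_mem hs.1,
      fun hs hts ht => ⟨M.down_closed hs.1 hts ht,
        (Ω _).1.down_closed hs.2 (Finset.image_subset_image hts) (ht.image _)⟩⟩,
      fun _ hs => hs.1⟩
  refine ⟨Λ, ?_, ?_⟩
  · intro s hs
    obtain ⟨j, hj⟩ := hcov _ (ρ.maps_faces hs)
    exact ⟨j, hs, hj⟩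
  · intro j i i'
    let ρj : SMap (Λ j).1 (Ω j).1 := ⟨ρ.toFun, fun hs => hs.2⟩
    have key : ∀ i : Fin n,
        CClass ((χ i).restrict (Λ j)) (((ψ i).restrict (Ω j)).comp ρj) := by
      intro i
      have h1 : CClass ((χ i).restrict (Λ j)) (((ψ i).comp ρ).restrict (Λ j)) := by
        rw [SMap.restrict_eq_comp_incl, SMap.restrict_eq_comp_incl]
        exact (hc i).comp_right _
      have h2 : ((ψ i).comp ρ).restrict (Λ j) = ((ψ i).restrict (Ω j)).comp ρj :=
        SMap.ext' rfl
      rwa [h2] at h1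
    exact ((key i).trans ((hcc j i i').comp_right ρj)).trans (key i').symm'

end Aux

/-- precomposing with maps `μᵢ` in one contiguity class admitting a
common right strong homotopy inverse preserves `SD`. -/
theorem SD_comp_right_strong_eq {U V W : Type} [DecidableEq U] [DecidableEq V]
    [DecidableEq W] {M : ASC U} {K : ASC V} {L : ASC W} {n : ℕ}
    (μ : Fin n → SMap M K)
    (hμ : ∀ (i : ℕ) (h : i + 1 < n),
      CClass (μ ⟨i, Nat.lt_of_succ_lt h⟩) (μ ⟨i + 1, h⟩))
    (α : SMap K M) (hα : ∀ i, CClass ((μ i).comp α) (SMap.id K))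
    (φ : Fin n → SMap K L) :
    SD (fun i => (φ i).comp (μ i)) = SD φ := by
  rcases Nat.eq_zero_or_pos n with hn | hn
  · subst hn
    have triv : ∀ (A : Type) [DecidableEq A] (B : Type) [DecidableEq B]
        (P : ASC A) (Q : ASC B) (χ : Fin 0 → SMap P Q) (k : ℕ), SDle χ k := by
      intro A _ B _ P Q χ k
      exact ⟨fun _ => ⟨P, fun _ hs => hs⟩, fun s hs => ⟨0, hs⟩, fun _ i => i.elim0⟩
    unfold SD
    congr 1
    ext m
    simp only [Set.mem_setOf_eq]
    constructor
    · rintro ⟨k, hk, -⟩; exact ⟨k, hk, triv _ _ _ _ _ _⟩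
    · rintro ⟨k, hk, -⟩; exact ⟨k, hk, triv _ _ _ _ _ _⟩
  · have key : ∀ j (h : j < n), CClass (μ ⟨0, hn⟩) (μ ⟨j, h⟩) := by
      intro j
      induction j with
      | zero => intro h; exact .refl
      | succ j ih => intro h; exact (ih (Nat.lt_of_succ_lt h)).trans (hμ j h)
    have dir1 : ∀ k, SDle (fun i => (φ i).comp (μ i)) k → SDle φ k := by
      intro k h
      refine SDle_pullback (fun i => (φ i).comp (μ i)) φ α (fun i => ?_) h
      have h1 : ((φ i).comp (μ i)).comp α = (φ i).comp ((μ i).comp α) :=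
        SMap.ext' rfl
      rw [h1]
      have h2 := ((hα i).comp_left (φ i)).symm'
      have h3 : (φ i).comp (SMap.id K) = φ i := SMap.ext' rfl
      rwa [h3] at h2
    have dir2 : ∀ k, SDle φ k → SDle (fun i => (φ i).comp (μ i)) k := by
      intro k h
      refine SDle_pullback φ (fun i => (φ i).comp (μ i)) (μ ⟨0, hn⟩)
        (fun i => ?_) h
      have h1 : CClass (μ i) (μ ⟨0, hn⟩) := by
        have := key i.1 i.2
        simpa using this.symm'
      exact h1.comp_left (φ i)
    unfold SD
    congr 1
    ext m
    simp only [Set.mem_setOf_eq]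
    constructor
    · rintro ⟨k, hk, hS⟩; exact ⟨k, hk, dir1 k hS⟩
    · rintro ⟨k, hk, hS⟩; exact ⟨k, hk, dir2 k hS⟩
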